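/- arXiv:1405.3848 — 2 statements merged into one kernel-verified Lean document; each statement's English description precedes it below -/
import Mathlib

section
/- For a finite simplicial complex K admitting a discrete Morse matching with c_i critical cells in dimension i, the i-th Betti number of K over any field F satisfies β_i(K; F) ≤ c_i (the discrete Morse inequalities). -/
open Finset
set_option linter.unusedSectionVars false

variable {V : Type*} [LinearOrder V]

/-- A (finite abstract) simplicial complex, given by its finset of faces:
all faces are nonempty and the collection is closed under nonempty subsets. -/
def IsComplex (S : Finset (Finset V)) : Prop :=
  ∀ F ∈ S, F.Nonempty ∧ ∀ G ⊆ F, G.Nonempty → G ∈ S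

/-- `σ` is a free face of `S`: it is properly contained in exactly one face `τ`,
which is moreover a facet. -/
def IsFreePair (S : Finset (Finset V)) (σ τ : Finset V) : Prop :=
  σ ∈ S ∧ τ ∈ S ∧ σ ⊂ τ ∧ (∀ ρ ∈ S, σ ⊂ ρ → ρ = τ) ∧ ∀ ρ ∈ S, ¬ τ ⊂ ρ

/-- `Collapses S T`: `S` reduces to `T` by a finite sequence of elementary collapses,
each removing a free face together with the unique facet containing it. -/
inductive Collapses : Finset (Finset V) → Finset (Finset V) → Prop
  | refl (S : Finset (Finset V)) : Collapses S S
  | step {S T : Finset (Finset V)} (σ τ : Finset V) :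
      IsFreePair S σ τ → Collapses (S \ {σ, τ}) T → Collapses S T

/-- A complex is collapsible if it collapses to a single vertex. -/
def Collapsible (S : Finset (Finset V)) : Prop :=
  ∃ v : V, Collapses S {({v} : Finset V)}

/-- A discrete Morse matching: an acyclic partial matching on the Hasse diagram
of `S`, pairing faces whose dimensions differ by one. -/
structure MorseMatching (S : Finset (Finset V)) where
  M : Finset (Finset V × Finset V)
  mem_left : ∀ p ∈ M, p.1 ∈ S
  mem_right : ∀ p ∈ M, p.2 ∈ S
  cover : ∀ p ∈ M, p.1 ⊂ p.2 ∧ p.2.card = p.1.card + 1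
  matching : ∀ p ∈ M, ∀ q ∈ M, p ≠ q →
    p.1 ≠ q.1 ∧ p.2 ≠ q.2 ∧ p.1 ≠ q.2 ∧ p.2 ≠ q.1
  /-- The modified Hasse diagram (matched pairs pointing up, unmatched cover
  relations pointing down) has no directed cycle. -/
  acyclic : ∀ σ : Finset V, ¬ Relation.TransGen
      (fun x y => (x, y) ∈ M ∨
        ((y, x) ∉ M ∧ y ⊂ x ∧ x.card = y.card + 1 ∧ x ∈ S ∧ y ∈ S)) σ σ

/-- A face is critical for a matching if it is unmatched. -/
def MorseMatching.Critical {S : Finset (Finset V)} (mm : MorseMatching S)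
    (F : Finset V) : Prop :=
  F ∈ S ∧ ∀ p ∈ mm.M, p.1 ≠ F ∧ p.2 ≠ F

open scoped Classical in
/-- The finset of critical (unmatched) cells of a matching. -/
noncomputable def MorseMatching.criticalCells {S : Finset (Finset V)}
    (mm : MorseMatching S) : Finset (Finset V) :=
  S.filter fun F => ∀ p ∈ mm.M, p.1 ≠ F ∧ p.2 ≠ F

open scoped Classical in
/-- `c_i`: the number of critical `i`-dimensional cells. -/
noncomputable def MorseMatching.critCount {S : Finset (Finset V)}
    (mm : MorseMatching S) (i : ℕ) : ℕ :=
  (mm.criticalCells.filter fun F => F.card = i + 1).card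

/-- Incidence coefficient between faces: `±1` if `G` is obtained from `F` by
removing one vertex (with the alternating sign from the vertex ordering), else `0`. -/
def inc (R : Type) [CommRing R] (F G : Finset V) : R :=
  ∑ v ∈ F, if G = F.erase v then (-1 : R) ^ ((F.filter fun u => u < v).card) else 0

/-- The `R`-module of simplicial `n`-chains of `S`: the free module on the
`n`-dimensional faces of `S`. -/
abbrev Chains (R : Type) [CommRing R] (S : Finset (Finset V)) (n : ℕ) : Type _ :=
  {F : Finset V // F ∈ S ∧ F.card = n + 1} → R

/-- The simplicial boundary map `∂_{n+1} : C_{n+1}(S;R) → C_n(S;R)`. -/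
noncomputable def bdry (R : Type) [CommRing R] (S : Finset (Finset V)) (n : ℕ) :
    Chains R S (n + 1) →ₗ[R] Chains R S n where
  toFun c := fun G => ∑ F ∈ (S.filter fun F => F.card = n + 2).attach,
    inc R F.val G.val *
      c ⟨F.val, (Finset.mem_filter.mp F.prop).1, (Finset.mem_filter.mp F.prop).2⟩
  map_add' x y := by
    funext G
    simp [mul_add, Finset.sum_add_distrib]
  map_smul' r x := by
    funext G
    simp only [Pi.smul_apply, smul_eq_mul, RingHom.id_apply, Finset.mul_sum]
    exact Finset.sum_congr rfl fun i _ => by ring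

/-- The augmentation `C_0(S;R) → R`, sending every vertex to `1`. -/
noncomputable def aug (R : Type) [CommRing R] (S : Finset (Finset V)) :
    Chains R S 0 →ₗ[R] R where
  toFun c := ∑ F ∈ (S.filter fun F => F.card = 1).attach,
    c ⟨F.val, (Finset.mem_filter.mp F.prop).1, (Finset.mem_filter.mp F.prop).2⟩
  map_add' x y := by simp [Finset.sum_add_distrib]
  map_smul' r x := by simp [Finset.mul_sum]

/-- The `i`-th Betti number of `S` over a field `F`: the dimension of the
`i`-th simplicial homology `ker ∂_i / im ∂_{i+1}` with coefficients in `F`. -/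
noncomputable def betti (F : Type) [Field F] (S : Finset (Finset V)) : ℕ → ℕ
  | 0 => Module.finrank F (Chains F S 0 ⧸ LinearMap.range (bdry F S 0))
  | (n + 1) => Module.finrank F
      (LinearMap.ker (bdry F S n) ⧸
        Submodule.comap (LinearMap.ker (bdry F S n)).subtype
          (LinearMap.range (bdry F S (n + 1))))

/-!
Over a field, `β_n = dim C_n - rank ∂_n - rank ∂_{n+1}`, where `∂_n : C_n → C_{n-1}` and
`∂_0 = 0`. Let `a_n` be the number of matched pairs `(σ, τ)` with `dim σ = n`. The `n`-faces are
either critical, or the lower face of one of the `a_n` pairs in dimensions `(n, n+1)`, or the upper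
face of one of the `a_{n-1}` pairs in dimensions `(n-1, n)`; so `dim C_n = c_n + a_n + a_{n-1}`,
with `a_{-1} = 0` because the empty set is not a face.
It remains to see `rank ∂_{n+1} ≥ a_n`. Index rows and columns by the pairs `(σ_p, τ_p)`: the
submatrix `⟨∂ τ_q, σ_p⟩` has diagonal entries `±1`, and a nonzero off-diagonal entry gives the path
`τ_q ↘ σ_p ↗ τ_p` in the modified Hasse diagram. Acyclicity makes the matrix triangular with
respect to a well-founded order, hence nonsingular.
-/

lemma Finset.exists_mem_eq_erase_of_subset_of_card_eq {α : Type*} [DecidableEq α]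
    {s t : Finset α} (h : s ⊆ t) (hcard : t.card = s.card + 1) : ∃ a ∈ t, s = t.erase a := by
  obtain ⟨a, ha, rfl⟩ := Finset.exists_eq_insert_iff.2 ⟨h, hcard.symm⟩
  exact ⟨a, Finset.mem_insert_self a s, (Finset.erase_insert ha).symm⟩

namespace Matrix

variable {ι R : Type*} [Fintype ι] [CommRing R] [NoZeroDivisors R]

theorem mulVec_injective_of_wellFounded {A : Matrix ι ι R} {r : ι → ι → Prop}
    (hr : WellFounded r) (hdiag : ∀ i, A i i ≠ 0) (hoff : ∀ i j, i ≠ j → A i j ≠ 0 → r j i) :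
    Function.Injective A.mulVec := by
  suffices hker : ∀ x, A *ᵥ x = 0 → x = 0 from fun x y hxy =>
    sub_eq_zero.1 (hker _ (by rw [mulVec_sub, hxy, sub_self]))
  intro x hx
  refine funext fun i => hr.induction (C := fun i => x i = 0) i fun i ih => ?_
  have hrow : (A *ᵥ x) i = A i i * x i := by
    refine Finset.sum_eq_single i (fun j _ hji => ?_) (absurd (Finset.mem_univ i))
    by_cases hA : A i j = 0
    · simp [hA]
    · simp [ih j (hoff i j (Ne.symm hji) hA)]
  rw [hx, Pi.zero_apply, eq_comm, mul_eq_zero] at hrow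
  exact hrow.resolve_left (hdiag i)

theorem rank_eq_card_of_mulVec_injective {K : Type*} [Field K] {A : Matrix ι ι K}
    (hA : Function.Injective A.mulVec) : A.rank = Fintype.card ι := by
  rw [rank, LinearMap.finrank_range_of_inj hA, Module.finrank_fintype_fun_eq_card]

end Matrix

theorem LinearMap.finrank_homology_add_finrank_range_add_finrank_range {K L M N : Type*}
    [DivisionRing K] [AddCommGroup L] [AddCommGroup M] [AddCommGroup N] [Module K L] [Module K M]
    [Module K N] [FiniteDimensional K M] {f : M →ₗ[K] N} {g : L →ₗ[K] M} (hfg : f ∘ₗ g = 0) :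
    Module.finrank K (ker f ⧸ (range g).comap (ker f).subtype) +
      Module.finrank K (range f) + Module.finrank K (range g) = Module.finrank K M := by
  have hquot := Submodule.finrank_quotient_add_finrank ((range g).comap (ker f).subtype)
  have hcomap := (Submodule.comapSubtypeEquivOfLe (range_le_ker_iff.2 hfg)).finrank_eq
  have hrank_nullity := finrank_range_add_finrank_ker f
  omega

section Incidence

variable {R : Type} [CommRing R]

lemma inc_erase {F : Finset V} {v : V} (hv : v ∈ F) :
    inc R F (F.erase v) = (-1) ^ #(F.filter fun u => u < v) := by
  rw [inc, Finset.sum_eq_single v (fun u hu huv => if_neg fun h => huv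
    (Finset.erase_injOn F hu hv h.symm)) (absurd hv), if_pos rfl]

lemma exists_eq_erase_of_inc_ne_zero {F G : Finset V} (h : inc R F G ≠ 0) :
    ∃ v ∈ F, G = F.erase v := by
  contrapose! h
  exact Finset.sum_eq_zero fun v hv => if_neg (h v hv)

lemma sign_erase_mul_sign_add {E : Finset V} {v w : V} (hw : w ∈ E) (hwv : w < v) :
    (-1 : R) ^ #((E.erase v).filter fun u => u < w) * (-1) ^ #(E.filter fun u => u < v) +
      (-1) ^ #((E.erase w).filter fun u => u < v) * (-1) ^ #(E.filter fun u => u < w) = 0 := by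
  have hbelow_w : (E.erase v).filter (fun u => u < w) = E.filter fun u => u < w := by
    rw [Finset.filter_erase, Finset.erase_eq_of_notMem]
    simpa using fun _ => hwv.le
  have hw_below_v : w ∈ E.filter fun u => u < v := Finset.mem_filter.2 ⟨hw, hwv⟩
  obtain ⟨k, hk⟩ := Nat.exists_eq_add_one_of_ne_zero (Finset.card_ne_zero_of_mem hw_below_v)
  rw [hbelow_w, Finset.filter_erase, Finset.card_erase_of_mem hw_below_v, hk,
    Nat.add_sub_cancel, pow_succ]
  ring

/-- The algebraic core of `∂ ∘ ∂ = 0`: removing `v` then `w` and removing `w` then `v`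
give the same face with opposite signs. -/
lemma sum_inc_erase_mul_sign (E G : Finset V) :
    ∑ v ∈ E, inc R (E.erase v) G * (-1) ^ #(E.filter fun u => u < v) = 0 := by
  set f : V × V → R := fun p =>
    (if G = (E.erase p.1).erase p.2 then (-1 : R) ^ #((E.erase p.1).filter fun u => u < p.2)
      else 0) * (-1) ^ #(E.filter fun u => u < p.1)
  have hsplit : ∑ v ∈ E, inc R (E.erase v) G * (-1) ^ #(E.filter fun u => u < v) =
      ∑ p ∈ E.offDiag, f p := by
    rw [Finset.sum_finset_product E.offDiag E (fun v => E.erase v)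
      (fun p => by simp only [Finset.mem_offDiag, Finset.mem_erase, ne_comm]; tauto)]
    exact Finset.sum_congr rfl fun v _ => Finset.sum_mul _ _ _
  rw [hsplit]
  refine Finset.sum_involution (fun p _ => p.swap) ?_ ?_ ?_ fun p _ => rfl
  · rintro ⟨v, w⟩ hp
    obtain ⟨hv, hw, hvw⟩ := Finset.mem_offDiag.1 hp
    simp only [f, Prod.swap, Finset.erase_right_comm (a := w)]
    split_ifs
    · rcases hvw.lt_or_gt with hlt | hlt
      · rw [add_comm]; exact sign_erase_mul_sign_add hv hlt
      · exact sign_erase_mul_sign_add hw hlt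
    · simp
  · rintro ⟨v, w⟩ hp - h
    exact (Finset.mem_offDiag.1 hp).2.2 (Prod.ext_iff.1 h).2
  · rintro ⟨v, w⟩ hp
    simp only [Finset.mem_offDiag] at hp ⊢
    exact ⟨hp.2.1, hp.1, fun h => hp.2.2 h.symm⟩

lemma sum_inc_mul_inc {T : Finset (Finset V)} {E : Finset V} (hT : ∀ v ∈ E, E.erase v ∈ T)
    (G : Finset V) : ∑ F ∈ T, inc R F G * inc R E F = 0 := by
  rw [← sum_inc_erase_mul_sign E G]
  simp_rw [fun F => inc.eq_1 R E F, Finset.mul_sum, mul_ite, mul_zero]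
  rw [Finset.sum_comm]
  refine Finset.sum_congr rfl fun v hv => ?_
  rw [Finset.sum_ite_eq' T, if_pos (hT v hv)]

end Incidence

section Boundary

variable (R : Type) [CommRing R] (S : Finset (Finset V))

instance (k : ℕ) : Fintype {F : Finset V // F ∈ S ∧ F.card = k} :=
  Fintype.subtype (S.filter fun F => F.card = k) fun _ => Finset.mem_filter

lemma sum_faces {M : Type*} [AddCommMonoid M] (k : ℕ) (f : Finset V → M) :
    ∑ F : {F : Finset V // F ∈ S ∧ F.card = k}, f F = ∑ F ∈ S.filter (fun F => F.card = k), f F :=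
  (Finset.sum_subtype _ (fun _ => Finset.mem_filter) f).symm

lemma finrank_chains (K : Type) [Field K] (n : ℕ) :
    Module.finrank K (Chains K S n) = #(S.filter fun F => F.card = n + 1) := by
  rw [Module.finrank_fintype_fun_eq_card, Fintype.card_of_subtype _ fun _ => Finset.mem_filter]

def bdryMatrix (n : ℕ) :
    Matrix {F : Finset V // F ∈ S ∧ F.card = n + 1} {F : Finset V // F ∈ S ∧ F.card = n + 1 + 1} R :=
  Matrix.of fun G F => inc R F.1 G.1

lemma bdry_eq_mulVecLin (n : ℕ) : bdry R S n = (bdryMatrix R S n).mulVecLin := by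
  refine LinearMap.ext fun c => funext fun G => ?_
  simp only [bdry, LinearMap.coe_mk, AddHom.coe_mk, Matrix.mulVecLin_apply, Matrix.mulVec,
    dotProduct, bdryMatrix, Matrix.of_apply]
  exact Fintype.sum_equiv (Equiv.subtypeEquivRight fun _ => Finset.mem_filter) _ _ fun _ => rfl

variable {S}

lemma bdryMatrix_mul_bdryMatrix (hS : IsComplex S) (n : ℕ) :
    bdryMatrix R S n * bdryMatrix R S (n + 1) = 0 := by
  ext G E
  obtain ⟨hES, hEcard⟩ := E.2
  simp only [Matrix.mul_apply, bdryMatrix, Matrix.of_apply, Matrix.zero_apply]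
  rw [sum_faces S _ (fun F => inc R F G.1 * inc R E.1 F)]
  refine sum_inc_mul_inc (fun v hv => Finset.mem_filter.2 ⟨?_, ?_⟩) G.1
  · refine (hS _ hES).2 _ (Finset.erase_subset v _) ?_
    rw [← Finset.card_pos, Finset.card_erase_of_mem hv, hEcard]
    omega
  · rw [Finset.card_erase_of_mem hv, hEcard]
    rfl

lemma bdry_comp_bdry (hS : IsComplex S) (n : ℕ) : bdry R S n ∘ₗ bdry R S (n + 1) = 0 := by
  rw [bdry_eq_mulVecLin, bdry_eq_mulVecLin, ← Matrix.mulVecLin_mul,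
    bdryMatrix_mul_bdryMatrix R hS, Matrix.mulVecLin_zero]

end Boundary

namespace MorseMatching

variable {S : Finset (Finset V)} (mm : MorseMatching S)

def modifiedHasse (x y : Finset V) : Prop :=
  (x, y) ∈ mm.M ∨ ((y, x) ∉ mm.M ∧ y ⊂ x ∧ x.card = y.card + 1 ∧ x ∈ S ∧ y ∈ S)

lemma wellFounded_transGen_modifiedHasse_comp {ι : Type*} [Finite ι] (f : ι → Finset V) :
    WellFounded fun i j => Relation.TransGen mm.modifiedHasse (f i) (f j) :=
  haveI : IsTrans ι fun i j => Relation.TransGen mm.modifiedHasse (f i) (f j) :=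
    ⟨fun _ _ _ => Relation.TransGen.trans⟩
  haveI : Std.Irrefl fun i j => Relation.TransGen mm.modifiedHasse (f i) (f j) :=
    ⟨fun i => mm.acyclic (f i)⟩
  Finite.wellFounded_of_trans_of_irrefl _

variable {mm}

lemma eq_of_fst_eq {p q : Finset V × Finset V} (hp : p ∈ mm.M) (hq : q ∈ mm.M)
    (h : p.1 = q.1) : p = q :=
  by_contra fun hpq => (mm.matching p hp q hq hpq).1 h

lemma eq_of_snd_eq {p q : Finset V × Finset V} (hp : p ∈ mm.M) (hq : q ∈ mm.M)
    (h : p.2 = q.2) : p = q :=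
  by_contra fun hpq => (mm.matching p hp q hq hpq).2.1 h

lemma fst_ne_snd {p q : Finset V × Finset V} (hp : p ∈ mm.M) (hq : q ∈ mm.M) : p.1 ≠ q.2 := by
  by_cases hpq : p = q
  · exact hpq ▸ (mm.cover p hp).1.ne
  · exact (mm.matching p hp q hq hpq).2.2.1

lemma inc_snd_fst_ne_zero (R : Type) [CommRing R] [Nontrivial R]
    {p : Finset V × Finset V} (hp : p ∈ mm.M) : inc R p.2 p.1 ≠ 0 := by
  obtain ⟨v, hv, hpv⟩ := Finset.exists_mem_eq_erase_of_subset_of_card_eq (mm.cover p hp).1.subset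
    (mm.cover p hp).2
  rw [hpv, inc_erase hv]
  exact (isUnit_neg_one.pow _).ne_zero

lemma transGen_modifiedHasse_of_inc_ne_zero {R : Type} [CommRing R]
    {p q : Finset V × Finset V} (hp : p ∈ mm.M) (hq : q ∈ mm.M) (hpq : p ≠ q)
    (hinc : inc R q.2 p.1 ≠ 0) : Relation.TransGen mm.modifiedHasse q.2 p.2 := by
  obtain ⟨v, hv, hpv⟩ := exists_eq_erase_of_inc_ne_zero hinc
  have hdown : (p.1, q.2) ∉ mm.M := fun h => by
    have hp' : p = (p.1, q.2) := eq_of_fst_eq hp h rfl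
    exact hpq (eq_of_snd_eq hp hq (Prod.ext_iff.1 hp').2)
  refine .head (.inr ⟨hdown, hpv ▸ Finset.erase_ssubset hv, ?_, mm.mem_right q hq,
    mm.mem_left p hp⟩) (.single (.inl hp))
  rw [hpv, Finset.card_erase_add_one hv]

variable (mm)

def pairs (n : ℕ) : Finset (Finset V × Finset V) :=
  mm.M.filter fun p => p.1.card = n + 1

lemma disjoint_image_fst_image_snd : Disjoint (mm.M.image Prod.fst) (mm.M.image Prod.snd) := by
  simp only [Finset.disjoint_left, Finset.mem_image]
  rintro _ ⟨p, hp, rfl⟩ ⟨q, hq, hpq⟩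
  exact fst_ne_snd hp hq hpq.symm

lemma image_fst_union_image_snd_subset : mm.M.image Prod.fst ∪ mm.M.image Prod.snd ⊆ S := by
  simp only [Finset.union_subset_iff, Finset.image_subset_iff]
  exact ⟨mm.mem_left, mm.mem_right⟩

lemma criticalCells_eq_sdiff :
    mm.criticalCells = S \ (mm.M.image Prod.fst ∪ mm.M.image Prod.snd) := by
  ext F
  simp only [criticalCells, Finset.mem_filter, Finset.mem_sdiff, Finset.mem_union,
    Finset.mem_image, not_or, not_exists, not_and, ← forall_and]

lemma card_filter_image_fst (P : Finset V → Prop) [DecidablePred P] :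
    #((mm.M.image Prod.fst).filter P) = #(mm.M.filter fun p => P p.1) := by
  rw [Finset.filter_image]
  exact Finset.card_image_of_injOn fun p hp q hq h =>
    eq_of_fst_eq (Finset.mem_filter.1 hp).1 (Finset.mem_filter.1 hq).1 h

lemma card_filter_image_snd (P : Finset V → Prop) [DecidablePred P] :
    #((mm.M.image Prod.snd).filter P) = #(mm.M.filter fun p => P p.2) := by
  rw [Finset.filter_image]
  exact Finset.card_image_of_injOn fun p hp q hq h =>
    eq_of_snd_eq (Finset.mem_filter.1 hp).1 (Finset.mem_filter.1 hq).1 h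

lemma card_filter_faces (n : ℕ) :
    #(S.filter fun F => F.card = n + 1) =
      mm.critCount n + #(mm.pairs n) + #(mm.M.filter fun p => p.2.card = n + 1) := by
  classical
  set matched := mm.M.image Prod.fst ∪ mm.M.image Prod.snd
  have hsplit : #(S.filter fun F => F.card = n + 1) =
      #((S \ matched).filter fun F => F.card = n + 1) +
        #(matched.filter fun F => F.card = n + 1) := by
    rw [← Finset.card_union_of_disjoint (Finset.disjoint_filter_filter Finset.sdiff_disjoint),
      ← Finset.filter_union, Finset.sdiff_union_of_subset mm.image_fst_union_image_snd_subset]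
  rw [hsplit, critCount, criticalCells_eq_sdiff, Finset.filter_union,
    Finset.card_union_of_disjoint
      (Finset.disjoint_filter_filter mm.disjoint_image_fst_image_snd),
    card_filter_image_fst, card_filter_image_snd, pairs, add_assoc]

lemma card_pairs_le_finrank_range_bdry (K : Type) [Field K] (n : ℕ) :
    #(mm.pairs n) ≤ Module.finrank K (LinearMap.range (bdry K S n)) := by
  have hmem : ∀ p ∈ mm.pairs n, p ∈ mm.M ∧ p.1.card = n + 1 := fun p => Finset.mem_filter.1
  let σ : mm.pairs n → {F : Finset V // F ∈ S ∧ F.card = n + 1} := fun p =>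
    ⟨p.1.1, mm.mem_left _ (hmem _ p.2).1, (hmem _ p.2).2⟩
  let τ : mm.pairs n → {F : Finset V // F ∈ S ∧ F.card = n + 1 + 1} := fun p =>
    ⟨p.1.2, mm.mem_right _ (hmem _ p.2).1, by rw [(mm.cover _ (hmem _ p.2).1).2, (hmem _ p.2).2]⟩
  have hinj : ((bdryMatrix K S n).submatrix σ τ).mulVec.Injective :=
    Matrix.mulVec_injective_of_wellFounded
      (mm.wellFounded_transGen_modifiedHasse_comp fun p : mm.pairs n => p.1.2)
      (fun p => inc_snd_fst_ne_zero K (hmem _ p.2).1)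
      (fun p q hpq hinc => transGen_modifiedHasse_of_inc_ne_zero (hmem _ p.2).1 (hmem _ q.2).1
        (Subtype.coe_ne_coe.2 hpq) hinc)
  calc #(mm.pairs n) = ((bdryMatrix K S n).submatrix σ τ).rank := by
        rw [Matrix.rank_eq_card_of_mulVec_injective hinj, Fintype.card_coe]
    _ ≤ (bdryMatrix K S n).rank := Matrix.rank_submatrix_le _ _ _
    _ = Module.finrank K (LinearMap.range (bdry K S n)) := by rw [bdry_eq_mulVecLin]; rfl

lemma card_faces_zero (hS : IsComplex S) :
    #(S.filter fun F => F.card = 0 + 1) = mm.critCount 0 + #(mm.pairs 0) := by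
  have hno_matched_vertex : mm.M.filter (fun p => p.2.card = 0 + 1) = ∅ := by
    refine Finset.filter_eq_empty_iff.2 fun p hp hcard => ?_
    have hne := Finset.card_pos.2 (hS _ (mm.mem_left p hp)).1
    have := (mm.cover p hp).2
    omega
  rw [card_filter_faces, hno_matched_vertex, Finset.card_empty, add_zero]

lemma card_faces_succ (n : ℕ) :
    #(S.filter fun F => F.card = n + 1 + 1) =
      mm.critCount (n + 1) + #(mm.pairs (n + 1)) + #(mm.pairs n) := by
  rw [card_filter_faces, pairs]
  congr 2
  exact Finset.filter_congr fun p hp => by rw [(mm.cover p hp).2, Nat.add_right_cancel_iff]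

end MorseMatching

/-- the discrete Morse inequalities `β_i(K; F) ≤ c_i`
over any field `F`. -/
theorem stmt7 (Fld : Type) [Field Fld] (S : Finset (Finset V)) (hS : IsComplex S)
    (mm : MorseMatching S) (i : ℕ) :
    betti Fld S i ≤ mm.critCount i := by
  cases i with
  | zero =>
    have hquot := Submodule.finrank_quotient_add_finrank (LinearMap.range (bdry Fld S 0))
    have hdim := finrank_chains S Fld 0
    have hcount := mm.card_faces_zero hS
    have hrank := mm.card_pairs_le_finrank_range_bdry Fld 0
    rw [betti]
    omega
  | succ n =>
    have hhom := LinearMap.finrank_homology_add_finrank_range_add_finrank_range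
      (bdry_comp_bdry Fld hS n)
    have hdim := finrank_chains S Fld (n + 1)
    have hcount := mm.card_faces_succ n
    have hrank := mm.card_pairs_le_finrank_range_bdry Fld n
    have hrank' := mm.card_pairs_le_finrank_range_bdry Fld (n + 1)
    rw [betti]
    omega
end

section
/- The dunce hat, obtained from a solid triangle by identifying its three boundary edges non-coherently (two with the same orientation and one with opposite orientation), is contractible. -/
open Finset
set_option linter.unusedSectionVars false


/-- The standard 2-simplex. -/
def Simplex2 : Set (Fin 3 → ℝ) := {x | (∀ i, 0 ≤ x i) ∧ ∑ i, x i = 1}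

/-- Parametrization of the edge from vertex `a` to vertex `b`. -/
def eAB (t : ℝ) : Fin 3 → ℝ := ![1 - t, t, 0]
/-- Parametrization of the edge from vertex `a` to vertex `c`. -/
def eAC (t : ℝ) : Fin 3 → ℝ := ![1 - t, 0, t]
/-- Parametrization of the edge from vertex `c` to vertex `b`. -/
def eCB (t : ℝ) : Fin 3 → ℝ := ![0, t, 1 - t]

/-- The identification `ab ~ ac ~ cb` of the three boundary edges of the
triangle (two with the same orientation, one with the opposite one). -/
def dunceRel (p q : Simplex2) : Prop :=
  ∃ t : ℝ, 0 ≤ t ∧ t ≤ 1 ∧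
    ((p.val = eAB t ∧ q.val = eAC t) ∨ (p.val = eAB t ∧ q.val = eCB t) ∨
      (p.val = eAC t ∧ q.val = eCB t))

/-- The dunce hat, as a quotient space of the solid triangle. -/
abbrev DunceHat : Type := Quot dunceRel


/-
The triangle, in polar coordinates `(ρ, θ)` about its barycentre, is a 2-cell attached to the
loop `a = [ab]` along the word `a a⁻¹ a⁻¹`; lifted to `ℝ` this is `attachingMap`, a map from
`[0, 1]` with end points `0` and `-1`, hence homotopic rel end points (by a straight line) to
`θ ↦ -θ`, i.e. to `a⁻¹`. The contraction has three stages. Blow up the disc of radius `1/4`.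
Along the collar `1/4 ≤ ρ ≤ 1` run this homotopy out to `a⁻¹` at `ρ = 1/2` and back, so that
the disc of radius `1/2` becomes a filling of `a⁻¹`. Shrink that disc radially: this contracts
`a⁻¹`, hence gives a null-homotopy of the loop, along which the collar (which only sees the
loop) is dragged. Each stage respects the gluing and so descends to the quotient.
-/

open Set Function unitInterval Topology

lemma apply_fract_of_mem_Icc {R α : Type*} [Ring R] [LinearOrder R] [FloorRing R]
    [IsOrderedRing R] {f : R → α} (hf : f 0 = f 1) {t : R} (ht : t ∈ Set.Icc 0 1) :
    f (Int.fract t) = f t := by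
  rcases ht.2.lt_or_eq with ht1 | rfl
  · rw [Int.fract_eq_self.2 ⟨ht.1, ht1⟩]
  · rw [Int.fract_one, hf]

lemma ContinuousMap.homotopic_of_curry {X Y : Type*} [TopologicalSpace X] [TopologicalSpace Y]
    (F : C(I × X, Y)) {f₀ f₁ : C(X, Y)} (h₀ : F.curry 0 = f₀) (h₁ : F.curry 1 = f₁) :
    f₀.Homotopic f₁ :=
  h₀ ▸ h₁ ▸ ⟨⟨F, fun _ => rfl, fun _ => rfl⟩⟩

noncomputable section

namespace DunceHat

/-- The boundary of the triangle, traversed `a → b → c → a` as `θ` runs through `[0, 1]`. -/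
def rimPoint (θ : ℝ) : Fin 3 → ℝ :=
  if θ ≤ 1 / 3 then eAB (3 * θ) else if θ ≤ 2 / 3 then eCB (2 - 3 * θ) else eAC (3 - 3 * θ)

/-- Polar coordinates on the triangle centred at its barycentre. -/
def polarPoint (ρ θ : ℝ) : Fin 3 → ℝ := fun i => (1 - ρ) / 3 + ρ * rimPoint θ i

lemma rimPoint_AB {t : ℝ} (ht : t ∈ I) : rimPoint (t / 3) = eAB t := by
  rw [rimPoint, if_pos (by linarith [ht.2])]
  congr 1; ring

lemma rimPoint_CB {t : ℝ} (ht : t ∈ I) : rimPoint ((2 - t) / 3) = eCB t := by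
  obtain ⟨h0, h1⟩ := ht
  unfold rimPoint
  rcases h1.eq_or_lt with rfl | h1
  · rw [if_pos (by norm_num)]
    ext i; fin_cases i <;> norm_num [eAB, eCB]
  · rw [if_neg (by linarith), if_pos (by linarith)]
    congr 1; ring

lemma rimPoint_AC {t : ℝ} (ht : t ∈ I) : rimPoint (1 - t / 3) = eAC t := by
  obtain ⟨h0, h1⟩ := ht
  unfold rimPoint
  rcases h1.eq_or_lt with rfl | h1
  · rw [if_neg (by norm_num), if_pos (by norm_num)]
    ext i; fin_cases i <;> norm_num [eCB, eAC]
  · rw [if_neg (by linarith), if_neg (by linarith)]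
    congr 1; ring

lemma rimPoint_zero_eq_one : rimPoint 0 = rimPoint 1 := by
  ext i; fin_cases i <;> norm_num [rimPoint, eAB, eAC]

lemma continuous_rimPoint : Continuous rimPoint := by
  have hAB : Continuous eAB := continuous_pi fun i => by fin_cases i <;> simp [eAB] <;> fun_prop
  have hCB : Continuous eCB := continuous_pi fun i => by fin_cases i <;> simp [eCB] <;> fun_prop
  have hAC : Continuous eAC := continuous_pi fun i => by fin_cases i <;> simp [eAC] <;> fun_prop
  refine Continuous.if_le (hAB.comp (by fun_prop)) (Continuous.if_le (hCB.comp (by fun_prop))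
    (hAC.comp (by fun_prop)) continuous_id continuous_const ?_) continuous_id continuous_const ?_
  · rintro θ rfl; ext i; fin_cases i <;> norm_num [eCB, eAC]
  · rintro θ rfl; ext i; fin_cases i <;> norm_num [eAB, eCB]

lemma rimPoint_mem {θ : ℝ} (hθ : θ ∈ I) : rimPoint θ ∈ Simplex2 := by
  obtain ⟨h0, h1⟩ := hθ
  refine ⟨fun i => ?_, ?_⟩
  · unfold rimPoint; split_ifs <;> fin_cases i <;> simp [eAB, eCB, eAC] <;> linarith
  · unfold rimPoint; split_ifs <;> simp [Fin.sum_univ_three, eAB, eCB, eAC]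

lemma exists_rimPoint_eq_zero (θ : ℝ) : ∃ i, rimPoint θ i = 0 := by
  unfold rimPoint
  split_ifs
  · exact ⟨2, by simp [eAB]⟩
  · exact ⟨0, by simp [eCB]⟩
  · exact ⟨1, by simp [eAC]⟩

lemma eq_of_rimPoint_eq {θ θ' : ℝ} (hθ : θ ∈ I) (hθ' : θ' ∈ I)
    (h : rimPoint θ = rimPoint θ') : θ = θ' ∨ (θ = 0 ∧ θ' = 1) ∨ (θ = 1 ∧ θ' = 0) := by
  obtain ⟨h0, h1⟩ := hθ
  obtain ⟨h0', h1'⟩ := hθ'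
  have e0 := congrFun h 0
  have e1 := congrFun h 1
  have e2 := congrFun h 2
  unfold rimPoint at e0 e1 e2
  split_ifs at e0 e1 e2 <;> simp [eAB, eAC, eCB] at e0 e1 e2 <;> grind

lemma exists_rimPoint_eq {y : Fin 3 → ℝ} (hy : y ∈ Simplex2) (hzero : ∃ i, y i = 0) :
    ∃ θ ∈ I, rimPoint θ = y := by
  obtain ⟨hpos, hsum⟩ := hy
  rw [Fin.sum_univ_three] at hsum
  have := hpos 0; have := hpos 1; have := hpos 2
  obtain ⟨i, hi⟩ := hzero
  fin_cases i <;> simp only [Fin.zero_eta, Fin.mk_one, Fin.reduceFinMk] at hi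
  · refine ⟨(2 - y 1) / 3, ⟨by linarith, by linarith⟩, ?_⟩
    rw [rimPoint_CB ⟨by linarith, by linarith⟩]
    ext j; fin_cases j <;> simp [eCB] <;> linarith
  · refine ⟨1 - y 2 / 3, ⟨by linarith, by linarith⟩, ?_⟩
    rw [rimPoint_AC ⟨by linarith, by linarith⟩]
    ext j; fin_cases j <;> simp [eAC] <;> linarith
  · refine ⟨y 1 / 3, ⟨by linarith, by linarith⟩, ?_⟩
    rw [rimPoint_AB ⟨by linarith, by linarith⟩]
    ext j; fin_cases j <;> simp [eAB] <;> linarith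

lemma polarPoint_one_left (θ : ℝ) : polarPoint 1 θ = rimPoint θ := by
  ext i; simp [polarPoint]

lemma polarPoint_zero_left (θ : ℝ) : polarPoint 0 θ = polarPoint 0 0 := by
  ext i; simp [polarPoint]

lemma polarPoint_seam (ρ : ℝ) : polarPoint ρ 0 = polarPoint ρ 1 := by
  unfold polarPoint; rw [rimPoint_zero_eq_one]

lemma polarPoint_mem {ρ θ : ℝ} (hρ : ρ ∈ I) (hθ : θ ∈ I) : polarPoint ρ θ ∈ Simplex2 := by
  obtain ⟨hnonneg, hsum⟩ := rimPoint_mem hθ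
  refine ⟨fun i => ?_, ?_⟩
  · have := mul_nonneg hρ.1 (hnonneg i)
    simp only [polarPoint]; linarith [hρ.2]
  · simp only [polarPoint, Fin.sum_univ_three] at hsum ⊢
    linear_combination ρ * hsum

lemma continuous_polarPoint : Continuous fun x : ℝ × ℝ => polarPoint x.1 x.2 :=
  continuous_pi fun i => by
    have : Continuous fun x : ℝ × ℝ => rimPoint x.2 i :=
      (continuous_apply i).comp (continuous_rimPoint.comp continuous_snd)
    simp only [polarPoint]; fun_prop

/-- The radius is read off from the smallest barycentric coordinate, `(1 - ρ) / 3`. -/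
lemma eq_of_polarPoint_eq {ρ θ ρ' θ' : ℝ} (hρ : 0 ≤ ρ) (hθ : θ ∈ I) (hρ' : 0 ≤ ρ')
    (hθ' : θ' ∈ I) (h : polarPoint ρ θ = polarPoint ρ' θ') :
    ρ = ρ' ∧ (ρ = 0 ∨ θ = θ' ∨ (θ = 0 ∧ θ' = 1) ∨ (θ = 1 ∧ θ' = 0)) := by
  obtain ⟨i, hi⟩ := exists_rimPoint_eq_zero θ
  obtain ⟨i', hi'⟩ := exists_rimPoint_eq_zero θ'
  have hρρ' : ρ = ρ' := by
    have k := congrFun h i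
    have k' := congrFun h i'
    simp only [polarPoint, hi, hi'] at k k'
    nlinarith [mul_nonneg hρ' ((rimPoint_mem hθ').1 i), mul_nonneg hρ ((rimPoint_mem hθ).1 i')]
  subst hρρ'
  refine ⟨rfl, hρ.eq_or_lt.imp Eq.symm fun hpos => eq_of_rimPoint_eq hθ hθ' ?_⟩
  ext j
  have := congrFun h j
  simp only [polarPoint, add_right_inj] at this
  exact mul_left_cancel₀ hpos.ne' this

lemma exists_polarPoint_eq {x : Fin 3 → ℝ} (hx : x ∈ Simplex2) :
    ∃ ρ ∈ I, ∃ θ ∈ I, polarPoint ρ θ = x := by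
  obtain ⟨hpos, hsum⟩ := hx
  rw [Fin.sum_univ_three] at hsum
  set m := min (x 0) (min (x 1) (x 2)) with hm
  have hm0 : m ≤ x 0 := min_le_left _ _
  have hm1 : m ≤ x 1 := (min_le_right _ _).trans (min_le_left _ _)
  have hm2 : m ≤ x 2 := (min_le_right _ _).trans (min_le_right _ _)
  have hmpos : 0 ≤ m := le_min (hpos 0) (le_min (hpos 1) (hpos 2))
  rcases (show 0 ≤ 1 - 3 * m by linarith).eq_or_lt with hρ | hρ
  · refine ⟨0, ⟨le_rfl, zero_le_one⟩, 0, ⟨le_rfl, zero_le_one⟩, ?_⟩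
    ext i; fin_cases i <;> simp [polarPoint] <;> linarith
  set ρ := 1 - 3 * m
  set y : Fin 3 → ℝ := fun i => (x i - m) / ρ
  have hy : y ∈ Simplex2 := by
    refine ⟨fun i => div_nonneg ?_ hρ.le, ?_⟩
    · fin_cases i <;> simp <;> linarith
    · simp only [y, Fin.sum_univ_three]
      field_simp
      linarith
  have hyzero : ∃ i, y i = 0 := by
    obtain ⟨i, hi⟩ : ∃ i, x i = m := by
      rcases min_choice (x 0) (min (x 1) (x 2)) with h | h
      · exact ⟨0, h.symm⟩
      rcases min_choice (x 1) (x 2) with h' | h'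
      · exact ⟨1, (h.trans h').symm⟩
      · exact ⟨2, (h.trans h').symm⟩
    exact ⟨i, by simp [y, hi]⟩
  obtain ⟨θ, hθ, hθy⟩ := exists_rimPoint_eq hy hyzero
  refine ⟨ρ, ⟨hρ.le, by linarith⟩, θ, hθ, ?_⟩
  ext i
  simp only [polarPoint, hθy, y]
  field_simp
  ring

def polar (x : I × I) : Simplex2 := ⟨polarPoint x.1 x.2, polarPoint_mem x.1.2 x.2.2⟩

lemma continuous_polar : Continuous polar :=
  (continuous_polarPoint.comp
    (show Continuous fun x : I × I => ((x.1 : ℝ), (x.2 : ℝ)) by fun_prop)).subtype_mk _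

lemma polar_surjective : Surjective polar := fun x => by
  obtain ⟨ρ, hρ, θ, hθ, h⟩ := exists_polarPoint_eq x.2
  exact ⟨(⟨ρ, hρ⟩, ⟨θ, hθ⟩), Subtype.ext h⟩

lemma isQuotientMap_polar : IsQuotientMap polar :=
  continuous_polar.isClosedMap.isQuotientMap continuous_polar polar_surjective

/-- Lift to `ℝ` of the attaching map of the 2-cell onto the edge loop: along the rim the word
`a a⁻¹ a⁻¹` is read as `0 ↗ 1 ↘ 0 ↘ -1`. -/
def attachingMap (θ : ℝ) : ℝ := min (3 * θ) (2 - 3 * θ)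

lemma attachingMap_AB {t : ℝ} (ht : t ∈ I) : attachingMap (t / 3) = t := by
  rw [attachingMap, min_eq_left (by linarith [ht.2])]; ring

lemma attachingMap_CB {t : ℝ} (ht : t ∈ I) : attachingMap ((2 - t) / 3) = t := by
  rw [attachingMap, min_eq_right (by linarith [ht.2])]; ring

lemma attachingMap_AC {t : ℝ} (ht : t ∈ I) : attachingMap (1 - t / 3) = t - 1 := by
  rw [attachingMap, min_eq_right (by linarith [ht.2])]; ring

/-- `rim` encodes `dunceRel`: on the edges `ab`, `cb`, `ac` at parameter `t` the attaching map
takes the values `t`, `t`, `t - 1`. -/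
structure RespectsGluing {X : Type*} (g : ℝ → ℝ → X) : Prop where
  center : ∀ θ ∈ I, g 0 θ = g 0 0
  seam : ∀ ρ ∈ I, g ρ 0 = g ρ 1
  rim : ∃ k : ℝ → X, Periodic k 1 ∧ ∀ θ ∈ I, g 1 θ = k (attachingMap θ)

namespace RespectsGluing

variable {X : Type*} {g : ℝ → ℝ → X}

lemma apply_eq_of_polar_eq (hg : RespectsGluing g) {x y : I × I} (h : polar x = polar y) :
    g x.1 x.2 = g y.1 y.2 := by
  obtain ⟨hρ, hρ0 | hθ | ⟨hθ, hθ'⟩ | ⟨hθ, hθ'⟩⟩ :=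
    eq_of_polarPoint_eq x.1.2.1 x.2.2 y.1.2.1 y.2.2 (congrArg Subtype.val h)
  · rw [← hρ, hρ0, hg.center _ x.2.2, hg.center _ y.2.2]
  · rw [hρ, hθ]
  · rw [hρ, hθ, hθ', hg.seam _ y.1.2]
  · rw [hρ, hθ, hθ', hg.seam _ y.1.2]

lemma apply_eq_of_dunceRel (hg : RespectsGluing g) {x y : I × I}
    (h : dunceRel (polar x) (polar y)) : g x.1 x.2 = g y.1 y.2 := by
  obtain ⟨k, hk, hrim⟩ := hg.rim
  have on_rim : ∀ {z : I × I} {θ : ℝ} (hθ : θ ∈ I), (polar z).val = rimPoint θ →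
      g z.1 z.2 = k (attachingMap θ) := fun {z θ} hθ hz => by
    rw [← hrim θ hθ]
    exact hg.apply_eq_of_polar_eq (y := (1, ⟨θ, hθ⟩))
      (Subtype.ext (hz.trans (polarPoint_one_left θ).symm))
  obtain ⟨t, ht0, ht1, hxy⟩ := h
  have ht : t ∈ I := ⟨ht0, ht1⟩
  have hAB : ∀ {z : I × I}, (polar z).val = eAB t → g z.1 z.2 = k t := fun hz => by
    rw [on_rim ⟨by linarith, by linarith⟩ (hz.trans (rimPoint_AB ht).symm), attachingMap_AB ht]
  have hCB : ∀ {z : I × I}, (polar z).val = eCB t → g z.1 z.2 = k t := fun hz => by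
    rw [on_rim ⟨by linarith, by linarith⟩ (hz.trans (rimPoint_CB ht).symm), attachingMap_CB ht]
  have hAC : ∀ {z : I × I}, (polar z).val = eAC t → g z.1 z.2 = k t := fun hz => by
    rw [on_rim ⟨by linarith, by linarith⟩ (hz.trans (rimPoint_AC ht).symm), attachingMap_AC ht,
      hk.sub_eq]
  rcases hxy with ⟨hx, hy⟩ | ⟨hx, hy⟩ | ⟨hx, hy⟩
  · rw [hAB hx, hAC hy]
  · rw [hAB hx, hCB hy]
  · rw [hAC hx, hCB hy]

end RespectsGluing

/-- The point of the dunce hat with polar coordinates `(ρ, θ)`, both clamped to `[0, 1]`. -/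
def polarMk (ρ θ : ℝ) : DunceHat :=
  Quot.mk _ (polar (projIcc 0 1 zero_le_one ρ, projIcc 0 1 zero_le_one θ))

lemma polarMk_coe (ρ θ : I) : polarMk ρ θ = Quot.mk _ (polar (ρ, θ)) := by
  simp [polarMk]

lemma continuous_polarMk : Continuous fun x : ℝ × ℝ => polarMk x.1 x.2 :=
  continuous_quot_mk.comp <| continuous_polar.comp <|
    (continuous_projIcc.comp continuous_fst).prodMk (continuous_projIcc.comp continuous_snd)

lemma polarMk_surjective (x : DunceHat) : ∃ ρ θ : I, polarMk ρ θ = x := by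
  obtain ⟨p, rfl⟩ := Quot.mk_surjective x
  obtain ⟨⟨ρ, θ⟩, rfl⟩ := polar_surjective p
  exact ⟨ρ, θ, polarMk_coe ρ θ⟩

lemma continuousMap_ext {X : Type*} [TopologicalSpace X] {f f' : C(DunceHat, X)}
    (h : ∀ ρ θ : I, f (polarMk ρ θ) = f' (polarMk ρ θ)) : f = f' :=
  ContinuousMap.ext fun x => by
    obtain ⟨ρ, θ, rfl⟩ := polarMk_surjective x
    exact h ρ θ

theorem exists_lift {X : Type*} [TopologicalSpace X] (G : ℝ → ℝ → ℝ → X)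
    (hG : Continuous fun x : I × I × I => G x.1 x.2.1 x.2.2)
    (hresp : ∀ s ∈ I, RespectsGluing (G s)) :
    ∃ F : C(I × DunceHat, X), ∀ s ρ θ : I, F (s, polarMk ρ θ) = G s ρ θ := by
  choose sec hsec using polar_surjective
  have hfiber (s : I) (x : I × I) : G s (sec (polar x)).1 (sec (polar x)).2 = G s x.1 x.2 :=
    (hresp s s.2).apply_eq_of_polar_eq (hsec _)
  let F : I × DunceHat → X := fun z =>
    Quot.lift (fun p => G z.1 (sec p).1 (sec p).2) (fun p q h => by
      obtain ⟨x, rfl⟩ := polar_surjective p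
      obtain ⟨y, rfl⟩ := polar_surjective q
      rw [hfiber, hfiber]
      exact (hresp z.1 z.1.2).apply_eq_of_dunceRel h) z.2
  have hF (s : I) (x : I × I) : F (s, Quot.mk _ (polar x)) = G s x.1 x.2 := hfiber s x
  refine ⟨⟨F, ?_⟩, fun s ρ θ => by rw [polarMk_coe]; exact hF s (ρ, θ)⟩
  apply (isQuotientMap_quot_mk.comp isQuotientMap_polar).continuous_lift_prod_right
  simpa only [comp_apply, hF] using hG

lemma polarMk_zero_left (θ : ℝ) : polarMk 0 θ = polarMk 0 0 :=
  congrArg (Quot.mk _) (Subtype.ext (by simp [polar, polarPoint_zero_left]))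

lemma polarMk_seam (ρ : ℝ) : polarMk ρ 0 = polarMk ρ 1 :=
  congrArg (Quot.mk _) (Subtype.ext (by simp [polar, polarPoint_seam]))

lemma polarMk_of_one_le {ρ : ℝ} (hρ : 1 ≤ ρ) (θ : ℝ) : polarMk ρ θ = polarMk 1 θ := by
  simp [polarMk, projIcc_of_right_le _ hρ]

lemma polarMk_one {θ : ℝ} (hθ : θ ∈ I) :
    polarMk 1 θ = Quot.mk _ ⟨rimPoint θ, rimPoint_mem hθ⟩ :=
  (polarMk_coe 1 ⟨θ, hθ⟩).trans (congrArg (Quot.mk _) (Subtype.ext (polarPoint_one_left θ)))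

lemma polarMk_one_CB {t : ℝ} (ht : t ∈ I) : polarMk 1 ((2 - t) / 3) = polarMk 1 (t / 3) := by
  rw [polarMk_one ⟨by linarith [ht.2], by linarith [ht.1]⟩,
    polarMk_one ⟨by linarith [ht.1], by linarith [ht.2]⟩]
  exact (Quot.sound ⟨t, ht.1, ht.2, Or.inr (Or.inl ⟨rimPoint_AB ht, rimPoint_CB ht⟩)⟩).symm

lemma polarMk_one_AC {t : ℝ} (ht : t ∈ I) : polarMk 1 (1 - t / 3) = polarMk 1 (t / 3) := by
  rw [polarMk_one ⟨by linarith [ht.2], by linarith [ht.1]⟩,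
    polarMk_one ⟨by linarith [ht.1], by linarith [ht.2]⟩]
  exact (Quot.sound ⟨t, ht.1, ht.2, Or.inl ⟨rimPoint_AB ht, rimPoint_AC ht⟩⟩).symm

/-- The edge `ab`, which the gluing turns into a loop, extended periodically to `ℝ`. -/
def edgeLoop (x : ℝ) : DunceHat := polarMk 1 (Int.fract x / 3)

lemma edgeLoop_periodic : Periodic edgeLoop 1 := fun x => by
  simp [edgeLoop, Int.fract_add_one]

lemma polarMk_one_zero_eq_third : polarMk 1 (0 / 3) = polarMk 1 (1 / 3) := by
  rw [← polarMk_one_CB ⟨le_rfl, zero_le_one⟩, ← polarMk_one_AC ⟨zero_le_one, le_rfl⟩]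
  norm_num

lemma continuous_edgeLoop : Continuous edgeLoop :=
  ContinuousOn.comp_fract''
    (continuous_polarMk.comp (by fun_prop : Continuous fun t : ℝ => ((1 : ℝ), t / 3))).continuousOn
    polarMk_one_zero_eq_third

lemma edgeLoop_of_mem {t : ℝ} (ht : t ∈ I) : edgeLoop t = polarMk 1 (t / 3) :=
  apply_fract_of_mem_Icc (f := fun t => polarMk 1 (t / 3)) polarMk_one_zero_eq_third ht

lemma polarMk_one_eq_edgeLoop {θ : ℝ} (hθ : θ ∈ I) :
    polarMk 1 θ = edgeLoop (attachingMap θ) := by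
  obtain ⟨h0, h1⟩ := hθ
  rcases le_total θ (1 / 3) with hθ₁ | hθ₁
  · rw [attachingMap, min_eq_left (by linarith), edgeLoop_of_mem ⟨by linarith, by linarith⟩]
    ring_nf
  rcases le_total θ (2 / 3) with hθ₂ | hθ₂
  · have ht : 2 - 3 * θ ∈ I := ⟨by linarith, by linarith⟩
    rw [attachingMap, min_eq_right (by linarith), edgeLoop_of_mem ht, ← polarMk_one_CB ht]
    ring_nf
  · have ht : 3 - 3 * θ ∈ I := ⟨by linarith, by linarith⟩
    rw [attachingMap, min_eq_right (by linarith), show 2 - 3 * θ = 3 - 3 * θ - 1 by ring,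
      edgeLoop_periodic.sub_eq, edgeLoop_of_mem ht, ← polarMk_one_AC ht]
    ring_nf

/-- Straight-line homotopy, with end points fixed at `0` and `-1`, from the attaching map to
`θ ↦ -θ`: the rim word `a a⁻¹ a⁻¹` is homotopic to `a⁻¹`. -/
def attachingHomotopy (τ θ : ℝ) : ℝ := (1 - τ) * attachingMap θ - τ * θ

lemma continuous_attachingHomotopy : Continuous fun x : ℝ × ℝ => attachingHomotopy x.1 x.2 := by
  unfold attachingHomotopy attachingMap; fun_prop

lemma attachingHomotopy_zero_left (θ : ℝ) : attachingHomotopy 0 θ = attachingMap θ := by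
  simp [attachingHomotopy]

lemma attachingHomotopy_one_left (θ : ℝ) : attachingHomotopy 1 θ = -θ := by
  simp [attachingHomotopy]

lemma attachingHomotopy_zero_right (τ : ℝ) : attachingHomotopy τ 0 = 0 := by
  simp [attachingHomotopy, attachingMap]

lemma attachingHomotopy_one_right (τ : ℝ) : attachingHomotopy τ 1 = -1 := by
  norm_num [attachingHomotopy, attachingMap]

lemma edgeLoop_attachingHomotopy_zero_eq_one (τ : ℝ) :
    edgeLoop (attachingHomotopy τ 0) = edgeLoop (attachingHomotopy τ 1) := by
  rw [attachingHomotopy_zero_right, attachingHomotopy_one_right, ← zero_sub,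
    edgeLoop_periodic.sub_eq]

lemma edgeLoop_neg_fract_neg (x : ℝ) : edgeLoop (-Int.fract (-x)) = edgeLoop x := by
  rw [show -Int.fract (-x) = x + ⌊-x⌋ * 1 by rw [Int.fract]; ring]
  exact edgeLoop_periodic.int_mul _ x

/-- Stage 1: the disc of radius `1/4` is blown up to the whole triangle. -/
def expandCore (s ρ θ : ℝ) : DunceHat := polarMk ((1 + 3 * s) * ρ) θ

/-- Stage 2: along the collar `ρ ≥ 1/4` the attaching homotopy is run out to `a⁻¹` at
`ρ = 1/2` and back to the attaching map at the rim. -/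
def insertCollar (s ρ θ : ℝ) : DunceHat :=
  if ρ ≤ 1 / 4 then polarMk (4 * ρ) θ
  else edgeLoop (attachingHomotopy (s * min (4 * ρ - 1) (2 - 2 * ρ)) θ)

/-- The disc of radius `1/2` at the end of stage 2, rescaled to radius `1` and made periodic in
`θ`: a filling of the loop `θ ↦ edgeLoop (-θ)`. -/
def innerDisc (r θ : ℝ) : DunceHat :=
  if r ≤ 1 / 2 then polarMk (2 * r) (Int.fract θ)
  else edgeLoop (attachingHomotopy (2 * r - 1) (Int.fract θ))

/-- Stage 3: the inner disc shrinks radially; the collar, which only sees the edge loop, follows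
along the null-homotopy of the edge loop that this shrinking provides. -/
def collapse (s ρ θ : ℝ) : DunceHat :=
  if ρ ≤ 1 / 2 then innerDisc ((1 - s) * (2 * ρ)) θ
  else innerDisc (1 - s) (-attachingHomotopy (2 - 2 * ρ) θ)

lemma innerDisc_periodic (r : ℝ) : Periodic (innerDisc r) 1 := fun θ => by
  simp [innerDisc, Int.fract_add_one]

lemma innerDisc_zero_left (θ : ℝ) : innerDisc 0 θ = polarMk 0 0 := by
  simp [innerDisc, polarMk_zero_left]

lemma innerDisc_of_mem (r : ℝ) {θ : ℝ} (hθ : θ ∈ I) : innerDisc r θ =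
    if r ≤ 1 / 2 then polarMk (2 * r) θ else edgeLoop (attachingHomotopy (2 * r - 1) θ) :=
  apply_fract_of_mem_Icc (f := fun θ => if r ≤ 1 / 2 then polarMk (2 * r) θ
    else edgeLoop (attachingHomotopy (2 * r - 1) θ))
    (by split_ifs <;> simp only [polarMk_seam, edgeLoop_attachingHomotopy_zero_eq_one]) hθ

lemma continuous_innerDisc : Continuous fun x : ℝ × ℝ => innerDisc x.1 x.2 := by
  have h₁ : Continuous fun x : ℝ × ℝ => polarMk (2 * x.1) (Int.fract x.2) :=
    ContinuousOn.comp_fract (f := fun (x : ℝ × ℝ) t => polarMk (2 * x.1) t)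
      (continuous_polarMk.comp
        (by fun_prop : Continuous fun p : (ℝ × ℝ) × ℝ => (2 * p.1.1, p.2))).continuousOn
      continuous_snd fun _ => polarMk_seam _
  have h₂ : Continuous fun x : ℝ × ℝ =>
      edgeLoop (attachingHomotopy (2 * x.1 - 1) (Int.fract x.2)) :=
    ContinuousOn.comp_fract (f := fun (x : ℝ × ℝ) t => edgeLoop (attachingHomotopy (2 * x.1 - 1) t))
      (continuous_edgeLoop.comp (continuous_attachingHomotopy.comp
        (by fun_prop : Continuous fun p : (ℝ × ℝ) × ℝ => (2 * p.1.1 - 1, p.2)))).continuousOn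
      continuous_snd fun _ => edgeLoop_attachingHomotopy_zero_eq_one _
  refine Continuous.if_le h₁ h₂ continuous_fst continuous_const fun x hx => ?_
  rw [hx, show 2 * (1 / 2 : ℝ) = 1 by norm_num, sub_self, attachingHomotopy_zero_left,
    polarMk_one_eq_edgeLoop ⟨Int.fract_nonneg _, (Int.fract_lt_one _).le⟩]

lemma continuous_expandCore : Continuous fun x : I × I × I => expandCore x.1 x.2.1 x.2.2 := by
  have : Continuous fun x : I × I × I => ((1 + 3 * (x.1 : ℝ)) * x.2.1, (x.2.2 : ℝ)) := by
    fun_prop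
  exact continuous_polarMk.comp this

lemma continuous_insertCollar :
    Continuous fun x : I × I × I => insertCollar x.1 x.2.1 x.2.2 := by
  have h₁ : Continuous fun x : I × I × I => (4 * (x.2.1 : ℝ), (x.2.2 : ℝ)) := by fun_prop
  have h₂ : Continuous fun x : I × I × I =>
      ((x.1 : ℝ) * min (4 * (x.2.1 : ℝ) - 1) (2 - 2 * x.2.1), (x.2.2 : ℝ)) := by fun_prop
  refine Continuous.if_le (continuous_polarMk.comp h₁)
    (continuous_edgeLoop.comp (continuous_attachingHomotopy.comp h₂))
    (by fun_prop) continuous_const fun x hx => ?_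
  simp only [hx]
  rw [polarMk_of_one_le (by norm_num), polarMk_one_eq_edgeLoop x.2.2.2]
  norm_num [attachingHomotopy_zero_left]

lemma continuous_collapse : Continuous fun x : I × I × I => collapse x.1 x.2.1 x.2.2 := by
  have h₁ : Continuous fun x : I × I × I => ((1 - (x.1 : ℝ)) * (2 * x.2.1), (x.2.2 : ℝ)) := by
    fun_prop
  have h₂ : Continuous fun x : I × I × I => (2 - 2 * (x.2.1 : ℝ), (x.2.2 : ℝ)) := by fun_prop
  have h₃ : Continuous fun x : I × I × I =>
      (1 - (x.1 : ℝ), -attachingHomotopy (2 - 2 * x.2.1) x.2.2) :=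
    (by fun_prop : Continuous fun x : I × I × I => 1 - (x.1 : ℝ)).prodMk
      (continuous_attachingHomotopy.comp h₂).neg
  refine Continuous.if_le (continuous_innerDisc.comp h₁) (continuous_innerDisc.comp h₃)
    (by fun_prop) continuous_const fun x hx => ?_
  simp only [hx]
  norm_num [attachingHomotopy_one_left]

lemma respectsGluing_expandCore {s : ℝ} (hs : s ∈ I) : RespectsGluing (expandCore s) where
  center θ _ := by simp [expandCore, polarMk_zero_left]
  seam ρ _ := polarMk_seam _
  rim := ⟨edgeLoop, edgeLoop_periodic, fun θ hθ => by
    rw [expandCore, polarMk_of_one_le (by linarith [hs.1]), polarMk_one_eq_edgeLoop hθ]⟩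

lemma respectsGluing_insertCollar (s : ℝ) : RespectsGluing (insertCollar s) where
  center θ _ := by simp [insertCollar, polarMk_zero_left]
  seam ρ _ := by
    unfold insertCollar
    split_ifs
    · exact polarMk_seam _
    · exact edgeLoop_attachingHomotopy_zero_eq_one _
  rim := ⟨edgeLoop, edgeLoop_periodic, fun θ _ => by
    norm_num [insertCollar, attachingHomotopy_zero_left]⟩

lemma respectsGluing_collapse (s : ℝ) : RespectsGluing (collapse s) where
  center θ _ := by simp [collapse, innerDisc_zero_left]
  seam ρ _ := by
    unfold collapse
    split_ifs
    · simpa using (innerDisc_periodic _ 0).symm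
    · simpa [attachingHomotopy_zero_right, attachingHomotopy_one_right] using
        (innerDisc_periodic _ 0).symm
  rim := ⟨fun y => innerDisc (1 - s) (-y), fun y => by
    simp only [neg_add', (innerDisc_periodic _).sub_eq], fun θ _ => by
      norm_num [collapse, attachingHomotopy_zero_left]⟩

lemma expandCore_zero (ρ θ : ℝ) : expandCore 0 ρ θ = polarMk ρ θ := by
  simp [expandCore]

lemma expandCore_one (ρ : ℝ) {θ : ℝ} (hθ : θ ∈ I) :
    expandCore 1 ρ θ = insertCollar 0 ρ θ := by
  unfold expandCore insertCollar
  split_ifs with h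
  · norm_num
  · rw [polarMk_of_one_le (by linarith), polarMk_one_eq_edgeLoop hθ, zero_mul,
      attachingHomotopy_zero_left]

lemma insertCollar_one (ρ : ℝ) {θ : ℝ} (hθ : θ ∈ I) :
    insertCollar 1 ρ θ = collapse 0 ρ θ := by
  unfold insertCollar collapse
  simp only [sub_zero, one_mul]
  rcases le_or_gt ρ (1 / 2) with h₂ | h₂
  · rw [if_pos h₂, innerDisc_of_mem _ hθ]
    by_cases h₁ : ρ ≤ 1 / 4
    · rw [if_pos h₁, if_pos (by linarith)]; ring_nf
    · rw [if_neg h₁, if_neg (by linarith), min_eq_left (by linarith)]; ring_nf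
  · rw [if_neg (by linarith), if_neg h₂.not_ge, innerDisc, if_neg (by norm_num),
      show 2 * (1 : ℝ) - 1 = 1 by norm_num, attachingHomotopy_one_left, edgeLoop_neg_fract_neg,
      min_eq_right (by linarith)]

lemma collapse_one (ρ θ : ℝ) : collapse 1 ρ θ = polarMk 0 0 := by
  simp [collapse, innerDisc_zero_left]

end DunceHat

end

open DunceHat in
/-- the dunce hat is contractible. -/
theorem stmt9 : ContractibleSpace DunceHat := by
  obtain ⟨F₁, hF₁⟩ := exists_lift expandCore continuous_expandCore
    fun _ => respectsGluing_expandCore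
  obtain ⟨F₂, hF₂⟩ := exists_lift insertCollar continuous_insertCollar
    fun s _ => respectsGluing_insertCollar s
  obtain ⟨F₃, hF₃⟩ := exists_lift collapse continuous_collapse
    fun s _ => respectsGluing_collapse s
  have e₀ : F₁.curry 0 = ContinuousMap.id _ :=
    continuousMap_ext fun ρ θ => by simp [hF₁, expandCore_zero]
  have e₁ : F₂.curry 0 = F₁.curry 1 :=
    continuousMap_ext fun ρ θ => by simp [hF₁, hF₂, expandCore_one ρ θ.2]
  have e₂ : F₃.curry 0 = F₂.curry 1 :=
    continuousMap_ext fun ρ θ => by simp [hF₂, hF₃, insertCollar_one ρ θ.2]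
  have e₃ : F₃.curry 1 = ContinuousMap.const _ (polarMk 0 0) :=
    continuousMap_ext fun ρ θ => by simp [hF₃, collapse_one]
  exact (contractible_iff_id_nullhomotopic _).2 ⟨polarMk 0 0,
    ((F₁.homotopic_of_curry e₀ rfl).trans (F₂.homotopic_of_curry e₁ rfl)).trans
      (F₃.homotopic_of_curry e₂ e₃)⟩
end
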